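/- arXiv:2011.11107 — 2 statements merged into one kernel-verified Lean document; each statement's English description precedes it below -/
import Mathlib

section
/- In the setting of the compatible decompositions D^B = H^B ⊕ im ∂^B ⊕ L^B and D^Λ = H^Λ ⊕ im ∂^Λ ⊕ L^Λ with H^Λ = F(H^B) ⊕ Ĥ and L^Λ = F(L^B) ⊕ L̂, the homotopies h^B : D^B → D^B and h^Λ : D^Λ → D^Λ satisfy F(h^B(f)) = h^Λ(F(f)) for all f ∈ D^B. -/
noncomputable section

universe u

/-- Data of a complete set of orthogonal idempotents indexed by the vertices `Fin n`
of a quiver, inside a `K`-algebra. -/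
structure IdemData (K : Type u) [Field K] (n : ℕ) (B : Type u) [Ring B] [Algebra K B] where
  e : Fin n → B
  orth : ∀ i j, e i * e j = if i = j then e i else 0
  complete : ∑ i, e i = 1

namespace IdemData

variable {K : Type u} [Field K] {n : ℕ} {B : Type u} [Ring B] [Algebra K B]

/-- Membership in the radical of a directed algebra: all "diagonal components" vanish.
For a directed (triangular, basic) algebra this is exactly the Jacobson radical. -/
def IsRad (d : IdemData K n B) (b : B) : Prop := ∀ i, d.e i * b * d.e i = 0

/-- A directed algebra: finite dimensional, basic, whose (Gabriel) quiver is acyclic with all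
arrows `i ⟶ j` satisfying `i < j`.  Equivalently: `e j * B * e i = 0` for `j < i` and the
"diagonal" components `e i * B * e i` are one-dimensional. -/
def Directed (d : IdemData K n B) : Prop :=
  FiniteDimensional K B ∧
  (∀ i j : Fin n, j < i → ∀ b : B, d.e j * b * d.e i = 0) ∧
  (∀ i : Fin n, ∀ b : B, ∃ c : K, d.e i * b * d.e i = c • d.e i)

/-- The opposite of a directed algebra (all arrows decrease); `A^op` for `A` directed. -/
def Codirected (d : IdemData K n B) : Prop :=
  FiniteDimensional K B ∧
  (∀ i j : Fin n, i < j → ∀ b : B, d.e j * b * d.e i = 0) ∧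
  (∀ i : Fin n, ∀ b : B, ∃ c : K, d.e i * b * d.e i = c • d.e i)

/-- The indecomposable projective left module `P(i) = B·e i`, realized as the left ideal
`{x | x * e i = x}`. -/
def proj (d : IdemData K n B) (i : Fin n) : Submodule B B where
  carrier := {x | x * d.e i = x}
  add_mem' := by
    intro a b ha hb
    simp only [Set.mem_setOf_eq] at *
    rw [add_mul, ha, hb]
  zero_mem' := by simp
  smul_mem' := by
    intro c x hx
    simp only [Set.mem_setOf_eq, smul_eq_mul] at *
    rw [mul_assoc, hx]

end IdemData

/-- The bilinear "multiplication" map `C ⊗ B → Λ`, `(c, b) ↦ ιC c * ιB b`. -/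
def dualBil {K : Type u} [Field K] {B C L : Type u} [Ring B] [Algebra K B] [Ring C] [Algebra K C]
    [Ring L] [Algebra K L] (ιB : B →ₐ[K] L) (ιC : C →ₐ[K] L) : C →ₗ[K] B →ₗ[K] L :=
  LinearMap.mk₂ K (fun c b => ιC c * ιB b)
    (fun c c' b => by simp only [map_add, add_mul])
    (fun k c b => by simp only [map_smul, smul_mul_assoc])
    (fun c b b' => by simp only [map_add, mul_add])
    (fun k c b => by simp only [map_smul, mul_smul_comm])

/-- `Λ` is the dual extension algebra `𝒜(B, C)` of `B` and `C` (in the paper `C = A^op`):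
`B` and `C` embed as subalgebras, sharing the idempotents; the product of a radical element of
`B` with a radical element of `C` (in this order; i.e. all paths `α β'`) vanishes; and the
products `ιC c * ιB b` span `Λ`, the only linear relations among them being the ones forced by
`ιC (c e_i) * ιB (e_j b) = 0` for `i ≠ j`.  This encodes `Λ ≅ ⊕_i C e_i ⊗ e_i B` as in
`Definition 2.1` of the paper. -/
structure DualExt (K : Type u) [Field K] (n : ℕ) (B C L : Type u) [Ring B] [Algebra K B]
    [Ring C] [Algebra K C] [Ring L] [Algebra K L]
    (dB : IdemData K n B) (dC : IdemData K n C) where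
  ιB : B →ₐ[K] L
  ιC : C →ₐ[K] L
  injB : Function.Injective ιB
  injC : Function.Injective ιC
  idem : ∀ i, ιB (dB.e i) = ιC (dC.e i)
  radMul : ∀ b c, dB.IsRad b → dC.IsRad c → ιB b * ιC c = 0
  spans : Submodule.span K {x : L | ∃ c b, x = ιC c * ιB b} = ⊤
  mulKer : LinearMap.ker (TensorProduct.lift (dualBil ιB ιC)) =
    Submodule.span K {x : TensorProduct K C B |
      ∃ i j : Fin n, i ≠ j ∧ ∃ c b, x = (c * dC.e i) ⊗ₜ[K] (dB.e j * b)}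

/-- The left ideal `{x | x * a = x}`; for an idempotent `a = e i` this is the
indecomposable projective module `P(i) = B e i`. -/
def leftIdeal {L : Type u} [Ring L] (a : L) : Submodule L L where
  carrier := {x | x * a = x}
  add_mem' := by
    intro x y hx hy
    simp only [Set.mem_setOf_eq] at *
    rw [add_mul, hx, hy]
  zero_mem' := by simp
  smul_mem' := by
    intro c x hx
    simp only [Set.mem_setOf_eq, smul_eq_mul] at *
    rw [mul_assoc, hx]

/-- A (ℤ-graded) dg-algebra of endomorphisms of a complex: the algebra `D` (modelling
`End(P•)` of a complex of projectives, whose elements are homogeneous graded endomorphisms,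
not necessarily chain maps) with an internal grading, containing the differential of the
complex as a degree-one square-zero element `d`, and with the differential
`∂ f = d f − (−1)^{|f|} f d`. -/
structure DGA (K : Type u) [Field K] (D : Type u) [Ring D] [Algebra K D] where
  gr : ℤ → Submodule K D
  internal : DirectSum.IsInternal gr
  one_mem : (1 : D) ∈ gr 0
  mul_mem : ∀ {a b : ℤ} {x y : D}, x ∈ gr a → y ∈ gr b → x * y ∈ gr (a + b)
  d : D
  d_mem : d ∈ gr 1
  d_sq : d * d = 0
  der : D →ₗ[K] D
  der_apply : ∀ (a : ℤ) (x : D), x ∈ gr a →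
    der x = d * x - ((Int.negOnePow a : ℤ) • (x * d))

/-- Merkulov's construction (following Lu–Palmieri–Wu–Zhang; Section 6 of the paper):
a decomposition `D = H ⊕ im ∂ ⊕ L`, where `H` consists of cycles and realizes the homology
(`H ≅ Ext*`), together with the projection `p : D → H`, the homotopy `h` (zero on `H ⊕ L`,
`∂⁻¹` on `im ∂`), the inductively defined maps
`λ₂ = multiplication`, `λ_n = Σ_{r+s=n, s ≥ 1} (−1)^{s+1} λ₂(hλ_r ⊗ hλ_s)` (`hλ₁ = −id`),
and the resulting `A∞`-multiplications `m_n = p ∘ λ_n ∘ i^{⊗n}` on `H ≅ Ext*`.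
Tuples are written `(ε_n, …, ε_1)` with `v 0 = ε_1` the first map to be composed. -/
structure Merkulov (K : Type u) [Field K] (D : Type u) [Ring D] [Algebra K D]
    (E : DGA K D) where
  H : ℤ → Submodule K D
  L : ℤ → Submodule K D
  H_le : ∀ a, H a ≤ E.gr a
  L_le : ∀ a, L a ≤ E.gr a
  H_cycle : ∀ a, ∀ x ∈ H a, E.der x = 0
  L_reg : ∀ a, ∀ x ∈ L a, E.der x = 0 → x = 0
  decomp : ∀ (a : ℤ), ∀ x ∈ E.gr a,
    ∃ xh ∈ H a, ∃ y ∈ L (a - 1), ∃ xl ∈ L a, x = xh + E.der y + xl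
  indep : ∀ (a : ℤ), ∀ xh ∈ H a, ∀ y ∈ L (a - 1), ∀ xl ∈ L a,
    xh + E.der y + xl = 0 → xh = 0 ∧ E.der y = 0 ∧ xl = 0
  p : D →ₗ[K] D
  p_H : ∀ a, ∀ x ∈ H a, p x = x
  p_bdry : ∀ x : D, p (E.der x) = 0
  p_L : ∀ a, ∀ x ∈ L a, p x = 0
  h : D →ₗ[K] D
  h_H : ∀ a, ∀ x ∈ H a, h x = 0
  h_L : ∀ a, ∀ x ∈ L a, h x = 0
  h_inv : ∀ a, ∀ x ∈ L a, h (E.der x) = x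
  lam : ∀ k : ℕ, (Fin k → D) → D
  lam_two : ∀ v : Fin 2 → D, lam 2 v = v 1 * v 0
  lam_rec : ∀ k : ℕ, 3 ≤ k → ∀ v : Fin k → D, lam k v =
    ∑ s ∈ (Finset.Ioo 0 k).attach,
      ((-1 : ℤ) ^ ((s : ℕ) + 1)) •
        ((if (k - (s : ℕ)) = 1 then
            -(v ⟨(s : ℕ), by have := Finset.mem_Ioo.mp s.property; omega⟩)
          else h (lam (k - (s : ℕ)) (fun i : Fin (k - (s : ℕ)) =>
            v ⟨(s : ℕ) + (i : ℕ), by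
              have := Finset.mem_Ioo.mp s.property
              have := i.isLt
              omega⟩))) *
         (if (s : ℕ) = 1 then
            -(v ⟨0, by have := Finset.mem_Ioo.mp s.property; omega⟩)
          else h (lam (s : ℕ) (fun i : Fin (s : ℕ) =>
            v ⟨(i : ℕ), by
              have := Finset.mem_Ioo.mp s.property
              have := i.isLt
              omega⟩))))
  m : ∀ k : ℕ, (Fin k → D) → D
  m_def : ∀ (k : ℕ) (v : Fin k → D), m k v = p (lam k v)

/-!
Merkulov's homotopy is determined by the decomposition alone: it sends `x_H + ∂y + x_L` to `y`.
Since `F` commutes with `∂` and maps `H^B` into `H^Λ` and `L^B` into `L^Λ`, it carries the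
decomposition of `f` to that of `F f`, so it intertwines the two homotopies.
-/

namespace DGA

variable {K : Type u} [Field K] {D D' : Type u} [Ring D] [Algebra K D] [Ring D'] [Algebra K D']

theorem linearMap_ext (E : DGA K D) {M : Type*} [AddCommGroup M] [Module K M]
    {f g : D →ₗ[K] M} (hfg : ∀ a, ∀ x ∈ E.gr a, f x = g x) : f = g := by
  ext x
  have hx : x ∈ ⨆ a, E.gr a := E.internal.submodule_iSup_eq_top ▸ Submodule.mem_top
  refine Submodule.iSup_induction (motive := fun x => f x = g x) E.gr hx hfg (by simp) ?_
  intro x y hx hy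
  rw [map_add, map_add, hx, hy]

theorem map_der (E : DGA K D) (E' : DGA K D') (F : D →ₐ[K] D')
    (hFgr : ∀ (a : ℤ) (x : D), x ∈ E.gr a → F x ∈ E'.gr a) (hFd : F E.d = E'.d) (x : D) :
    F (E.der x) = E'.der (F x) := by
  suffices F.toLinearMap ∘ₗ E.der = E'.der ∘ₗ F.toLinearMap from LinearMap.congr_fun this x
  refine E.linearMap_ext fun a y hy => ?_
  simp only [LinearMap.comp_apply, AlgHom.toLinearMap_apply]
  rw [E.der_apply a y hy, E'.der_apply a (F y) (hFgr a y hy)]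
  simp [hFd]

end DGA

namespace Merkulov

variable {K : Type u} [Field K] {D D' : Type u} [Ring D] [Algebra K D] [Ring D'] [Algebra K D']
  {E : DGA K D} {E' : DGA K D'}

theorem h_add_der_add (M : Merkulov K D E) {a : ℤ} {xh y xl : D} (hxh : xh ∈ M.H a)
    (hy : y ∈ M.L (a - 1)) (hxl : xl ∈ M.L a) : M.h (xh + E.der y + xl) = y := by
  rw [map_add, map_add, M.h_H a xh hxh, M.h_inv (a - 1) y hy, M.h_L a xl hxl, zero_add, add_zero]

theorem comp_h_eq_h_comp (M : Merkulov K D E) (M' : Merkulov K D' E') (G : D →ₗ[K] D')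
    (hGder : ∀ x, G (E.der x) = E'.der (G x))
    (hGH : ∀ a, (M.H a).map G ≤ M'.H a) (hGL : ∀ a, (M.L a).map G ≤ M'.L a) :
    G ∘ₗ M.h = M'.h ∘ₗ G := by
  refine E.linearMap_ext fun a f hf => ?_
  obtain ⟨xh, hxh, y, hy, xl, hxl, rfl⟩ := M.decomp a f hf
  have hGxh : G xh ∈ M'.H a := hGH a (Submodule.mem_map_of_mem hxh)
  have hGy : G y ∈ M'.L (a - 1) := hGL (a - 1) (Submodule.mem_map_of_mem hy)
  have hGxl : G xl ∈ M'.L a := hGL a (Submodule.mem_map_of_mem hxl)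
  rw [LinearMap.comp_apply, LinearMap.comp_apply, M.h_add_der_add hxh hy hxl,
    map_add G, map_add G, hGder, M'.h_add_der_add hGxh hGy hGxl]

end Merkulov

theorem statement12_general
    (K : Type) [Field K]
    (DB DL : Type) [Ring DB] [Algebra K DB] [Ring DL] [Algebra K DL]
    (EB : DGA K DB) (EL : DGA K DL)
    (F : DB →ₐ[K] DL)
    (hFgr : ∀ (a : ℤ) (x : DB), x ∈ EB.gr a → F x ∈ EL.gr a)
    (hFd : F EB.d = EL.d)
    -- Merkulov data with the compatible decompositions of Statement 10
    (MB : Merkulov K DB EB) (ML : Merkulov K DL EL)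
    (Hhat Lhat : ℤ → Submodule K DL)
    (hH : ∀ a, ML.H a = (MB.H a).map F.toLinearMap ⊔ Hhat a)
    (hL : ∀ a, ML.L a = (MB.L a).map F.toLinearMap ⊔ Lhat a) :
    ∀ f : DB, F (MB.h f) = ML.h (F f) :=
  LinearMap.congr_fun <| MB.comp_h_eq_h_comp ML F.toLinearMap (EB.map_der EL F hFgr hFd)
    (fun a => (hH a).symm ▸ le_sup_left) (fun a => (hL a).symm ▸ le_sup_left)

/-- Corollary 6.7 of the paper.
In the setting of the compatible decompositions
`D^B = H^B ⊕ im ∂^B ⊕ L^B` and `D^Λ = H^Λ ⊕ im ∂^Λ ⊕ L^Λ` with `H^Λ = F(H^B) ⊕ Ĥ` and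
`L^Λ = F(L^B) ⊕ L̂` (Statement 10), the homotopies `h^B : D^B → D^B` and
`h^Λ : D^Λ → D^Λ` of Merkulov's construction satisfy `F(h^B(f)) = h^Λ(F(f))` for all
`f ∈ D^B`. -/
theorem statement12
    (K : Type) [Field K] [IsAlgClosed K] (n : ℕ)
    (B C L : Type) [Ring B] [Algebra K B] [Ring C] [Algebra K C] [Ring L] [Algebra K L]
    (dB : IdemData K n B) (dC : IdemData K n C)
    (hB : dB.Directed) (hC : dC.Codirected)
    (DEx : DualExt K n B C L dB dC)
    (DB DL : Type) [Ring DB] [Algebra K DB] [Ring DL] [Algebra K DL]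
    (EB : DGA K DB) (EL : DGA K DL)
    (F : DB →ₐ[K] DL) (hFinj : Function.Injective F)
    (hFgr : ∀ (a : ℤ) (x : DB), x ∈ EB.gr a → F x ∈ EL.gr a)
    (hFd : F EB.d = EL.d)
    -- Merkulov data with the compatible decompositions of Statement 10
    (MB : Merkulov K DB EB) (ML : Merkulov K DL EL)
    (Hhat Lhat : ℤ → Submodule K DL)
    (hH : ∀ a, ML.H a = (MB.H a).map F.toLinearMap ⊔ Hhat a)
    (hL : ∀ a, ML.L a = (MB.L a).map F.toLinearMap ⊔ Lhat a) :
    ∀ f : DB, F (MB.h f) = ML.h (F f) :=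
  statement12_general K DB DL EB EL F hFgr hFd MB ML Hhat Lhat hH hL
end
end

section
/- Let ℓ ≥ 3 and B = K𝔸_n/(rad K𝔸_n)^ℓ. Then for all vertices i, j and k ≥ 0: dim_K Ext^{2k}_B(L_B(i), L_B(j)) = 1 if j = i + kℓ (and j ≤ n) and 0 otherwise, and dim_K Ext^{2k+1}_B(L_B(i), L_B(j)) = 1 if j = i + kℓ + 1 (and j ≤ n) and 0 otherwise. Moreover, the k-th term of the minimal projective resolution of L_B(i) is P_B(i+qℓ) if k = 2q and P_B(i+qℓ+1) if k = 2q+1 (as long as these vertices exist, and the resolution terminates otherwise). -/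
noncomputable section

universe u

/-- A projective resolution `⋯ → P 1 → P 0 → M → 0` of the module `M` over `R`. -/
structure ProjRes (K : Type u) [Field K] (R : Type u) [Ring R] [Algebra K R]
    (M : Type u) [AddCommGroup M] [Module R M] where
  P : ℕ → Type u
  [acg : ∀ k, AddCommGroup (P k)]
  [mod : ∀ k, Module R (P k)]
  d : ∀ k, P (k + 1) →ₗ[R] P k
  aug : P 0 →ₗ[R] M
  proj : ∀ k, Module.Projective R (P k)
  aug_surj : Function.Surjective aug
  exact0 : LinearMap.ker aug = LinearMap.range (d 0)
  exact : ∀ k, LinearMap.ker (d k) = LinearMap.range (d (k + 1))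

attribute [instance] ProjRes.acg ProjRes.mod

/-- Minimality of a projective resolution: the differentials are radical maps,
`im (d k) ⊆ rad R · P k` (the radical being described by the idempotent data). -/
def ProjRes.Minimal {K : Type u} [Field K] {R : Type u} [Ring R] [Algebra K R]
    {M : Type u} [AddCommGroup M] [Module R M] {n : ℕ}
    (dd : IdemData K n R) (Q : ProjRes K R M) : Prop :=
  ∀ k, LinearMap.range (Q.d k) ≤
    Submodule.span R {x : Q.P k | ∃ b m, dd.IsRad b ∧ x = b • m}

/-- `S` is (a copy of) the simple module `L(i)` at the vertex `i`: it is simple and the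
idempotent `e i` acts as the identity on it. -/
def IdemData.IsSimpleAt {K : Type u} [Field K] {n : ℕ} {B : Type u} [Ring B] [Algebra K B]
    (d : IdemData K n B) (i : Fin n) (S : Type u) [AddCommGroup S] [Module B S] : Prop :=
  IsSimpleModule B S ∧ ∀ s : S, d.e i • s = s

/-- The standard module `Δ_Λ(i) = Λe_i / Λ·(rad B)·e_i` of the dual extension algebra
(the quotient of the indecomposable projective `P_Λ(i)` by the span of the images of all
maps from `P_Λ(j)`, `j > i`, equivalently by `Λ·(rad B)·e i`). -/
def DualExt.std {K : Type u} [Field K] {n : ℕ} {B C L : Type u} [Ring B] [Algebra K B]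
    [Ring C] [Algebra K C] [Ring L] [Algebra K L] {dB : IdemData K n B} {dC : IdemData K n C}
    (D : DualExt K n B C L dB dC) (i : Fin n) : Type u :=
  ↥(leftIdeal (D.ιB (dB.e i))) ⧸
    ((Submodule.span L {x : L | ∃ b, dB.IsRad b ∧ x = D.ιB b * D.ιB (dB.e i)}).comap
      (leftIdeal (D.ιB (dB.e i))).subtype)

noncomputable instance {K : Type u} [Field K] {n : ℕ} {B C L : Type u} [Ring B] [Algebra K B]
    [Ring C] [Algebra K C] [Ring L] [Algebra K L] {dB : IdemData K n B} {dC : IdemData K n C}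
    (D : DualExt K n B C L dB dC) (i : Fin n) : AddCommGroup (D.std i) :=
  by unfold DualExt.std; infer_instance

noncomputable instance {K : Type u} [Field K] {n : ℕ} {B C L : Type u} [Ring B] [Algebra K B]
    [Ring C] [Algebra K C] [Ring L] [Algebra K L] {dB : IdemData K n B} {dC : IdemData K n C}
    (D : DualExt K n B C L dB dC) (i : Fin n) : Module L (D.std i) :=
  by unfold DualExt.std; infer_instance

section stdInstances

variable {K : Type u} [Field K] {n : ℕ} {B C L : Type u} [Ring B] [Algebra K B]
  [Ring C] [Algebra K C] [Ring L] [Algebra K L] {dB : IdemData K n B} {dC : IdemData K n C}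

noncomputable instance (D : DualExt K n B C L dB dC) (i : Fin n) : Module K (D.std i) :=
  Module.compHom _ (algebraMap K L)

instance (D : DualExt K n B C L dB dC) (i : Fin n) : SMulCommClass L K (D.std i) := by
  constructor
  intro l k x
  show l • (algebraMap K L k • x) = algebraMap K L k • (l • x)
  rw [← mul_smul, ← mul_smul, Algebra.commutes]

instance (D : DualExt K n B C L dB dC) (i : Fin n) : IsScalarTower K L (D.std i) := by
  constructor
  intro k l x
  show (k • l) • x = algebraMap K L k • l • x
  rw [← mul_smul, Algebra.smul_def]

end stdInstances

/-- The "corner" subspace `e·X·f = {x | e * x * f = x}` of an algebra, e.g. `e j * A * e ℓ`. -/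
def cornerSpace (K : Type u) [Field K] {A : Type u} [Ring A] [Algebra K A] (e f : A) :
    Submodule K A where
  carrier := {x | e * x * f = x}
  add_mem' := by
    intro x y hx hy
    simp only [Set.mem_setOf_eq] at *
    rw [mul_add, add_mul, hx, hy]
  zero_mem' := by simp
  smul_mem' := by
    intro c x hx
    simp only [Set.mem_setOf_eq] at *
    rw [mul_smul_comm, smul_mul_assoc, hx]

/-- The algebra `B` (with idempotent data `d`) is the banded Nakayama algebra
`K𝔸ₙ/(rad K𝔸ₙ)^ℓ`: it is directed, the space of paths `i → j` is one-dimensional when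
`i ≤ j < i + ℓ` and zero otherwise, and nonzero paths compose to nonzero paths as long as
the total length stays `< ℓ`. -/
def IsBandAlgebra {K : Type u} [Field K] {n : ℕ} {B : Type u} [Ring B] [Algebra K B]
    (d : IdemData K n B) (ℓ : ℕ) : Prop :=
  d.Directed ∧
  (∀ i j : Fin n, i ≤ j → (j : ℕ) < (i : ℕ) + ℓ →
    Module.finrank K ↥(cornerSpace K (d.e j) (d.e i)) = 1) ∧
  (∀ i j : Fin n, ¬(i ≤ j ∧ (j : ℕ) < (i : ℕ) + ℓ) →
    cornerSpace K (d.e j) (d.e i) = ⊥) ∧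
  (∀ i j k : Fin n, i ≤ j → j ≤ k → (k : ℕ) < (i : ℕ) + ℓ →
    ∀ x y : B, x ∈ cornerSpace K (d.e k) (d.e j) → y ∈ cornerSpace K (d.e j) (d.e i) →
      x ≠ 0 → y ≠ 0 → x * y ≠ 0)



/-!
In `K𝔸ₙ/(rad K𝔸ₙ)^ℓ` the projective `P(v) = B e_v` has one path `v → j` for each
`v ≤ j < v + ℓ`, and its radical layer `J^t P(v)` is the image of right multiplication
`P(v + t) → P(v)` by the path `v → v + t`, whose kernel is `J^(ℓ - t) P(v + t)`.
Starting from `L(i) = P(i) / J P(i)`, the syzygies therefore alternate between `J^1` and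
`J^(ℓ-1)` while the vertex advances by `1` and `ℓ - 1`. Since the radical is nilpotent,
Nakayama's lemma makes projective covers unique, so every minimal resolution has these terms.
Minimality also kills the differentials of `Hom(P^•, L(j))`, and `Hom(P(v), L(j))` is
one-dimensional exactly when `v = j`.
-/

lemma mem_leftIdeal {L : Type u} [Ring L] {a x : L} : x ∈ leftIdeal a ↔ x * a = x := Iff.rfl

lemma projective_leftIdeal {L : Type u} [Ring L] {a : L} (ha : IsIdempotentElem a) :
    Module.Projective L (leftIdeal a) := by
  refine Module.Projective.of_split (M := L) (leftIdeal a).subtype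
    ((LinearMap.toSpanSingleton L L a).codRestrict _ fun x => ?_) ?_
  · simp [mem_leftIdeal, mul_assoc, ha.eq]
  · ext x
    exact mem_leftIdeal.mp x.2

def mulRightLeftIdeal {L : Type u} [Ring L] (a : L) {b p : L} (hp : p ∈ leftIdeal b) :
    leftIdeal a →ₗ[L] leftIdeal b :=
  (LinearMap.toSpanSingleton L L p).restrict fun x _ => by
    simp [mem_leftIdeal, mul_assoc, mem_leftIdeal.mp hp]

lemma algebraMap_smul_eq_zero_iff {K B S : Type u} [Field K] [Ring B] [Algebra K B]
    [AddCommGroup S] [Module B S] {c : K} {s : S} :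
    algebraMap K B c • s = 0 ↔ c = 0 ∨ s = 0 := by
  refine ⟨fun h => or_iff_not_imp_left.mpr fun hc => ?_, ?_⟩
  · rw [← one_smul B s, ← map_one (algebraMap K B), ← inv_mul_cancel₀ hc, map_mul, mul_smul, h,
      smul_zero]
  · rintro (rfl | rfl) <;> simp

namespace IdemData

open Submodule

variable {K : Type u} [Field K] {n : ℕ} {B : Type u} [Ring B] [Algebra K B]
  (d : IdemData K n B)

lemma e_mul_self (i : Fin n) : d.e i * d.e i = d.e i := by
  simpa using d.orth i i

lemma e_mul_e_of_ne {i j : Fin n} (h : i ≠ j) : d.e i * d.e j = 0 := by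
  simpa [h] using d.orth i j

lemma sum_e_mul (x : B) : ∑ j, d.e j * x = x := by
  rw [← Finset.sum_mul, d.complete, one_mul]

lemma sum_e_smul {M : Type u} [AddCommGroup M] [Module B M] (x : M) : ∑ j, d.e j • x = x := by
  rw [← Finset.sum_smul, d.complete, one_smul]

lemma e_mul_mul_eq_sum (j : Fin n) (b c : B) :
    d.e j * (b * c) = ∑ m, (d.e j * b * d.e m) * (d.e m * c) := by
  conv_lhs => rw [← d.sum_e_mul c]
  simp only [Finset.mul_sum, ← mul_assoc, mul_assoc _ (d.e _) (d.e _), d.e_mul_self]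

lemma e_mul_mul_mem_cornerSpace (x : B) (j i : Fin n) :
    d.e j * x * d.e i ∈ cornerSpace K (d.e j) (d.e i) := by
  change d.e j * (d.e j * x * d.e i) * d.e i = _
  simp only [← mul_assoc, d.e_mul_self]
  rw [mul_assoc _ (d.e i), d.e_mul_self]

/-- `b ∈ (rad B)^m`, for a directed algebra. -/
def IsRadPow (m : ℕ) (b : B) : Prop :=
  ∀ i j : Fin n, (j : ℕ) < (i : ℕ) + m → d.e j * b * d.e i = 0

variable {d}

lemma IsRadPow.mul {a c : ℕ} {b b' : B} (hb : d.IsRadPow a b) (hb' : d.IsRadPow c b') :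
    d.IsRadPow (a + c) (b * b') := by
  intro i j hj
  rw [mul_assoc, mul_assoc, d.e_mul_mul_eq_sum]
  refine Finset.sum_eq_zero fun m _ => ?_
  by_cases hm : (j : ℕ) < (m : ℕ) + a
  · rw [hb m j hm, zero_mul]
  · rw [← mul_assoc (d.e m), hb' i m (by omega), mul_zero]

lemma IsRadPow.mono {m m' : ℕ} {b : B} (hb : d.IsRadPow m' b) (h : m ≤ m') : d.IsRadPow m b :=
  fun i j hj => hb i j (by omega)

lemma Directed.isRadPow_zero (hdir : d.Directed) (b : B) : d.IsRadPow 0 b :=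
  fun i j hj => hdir.2.1 i j (by exact_mod_cast hj) b

lemma IsRad.isRadPow_one (hdir : d.Directed) {b : B} (hb : d.IsRad b) : d.IsRadPow 1 b := by
  intro i j hj
  rcases (Nat.lt_succ_iff.mp hj).lt_or_eq with h | h
  · exact hdir.2.1 i j (by exact_mod_cast h) b
  · rw [Fin.ext h]
    exact hb i

/-- Every component of `b` is indexed by a pair of vertices, so `(rad B)^n = 0`. -/
lemma IsRadPow.eq_zero {m : ℕ} {b : B} (hb : d.IsRadPow m b) (hm : n ≤ m) : b = 0 := by
  rw [← d.sum_e_mul b]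
  refine Finset.sum_eq_zero fun j _ => ?_
  rw [← mul_one (d.e j * b), ← d.complete, Finset.mul_sum]
  exact Finset.sum_eq_zero fun i _ => hb i j (by omega)

variable (d) {Q : Type u} [AddCommGroup Q] [Module B Q]

/-- The submodule `(rad B)^m · N`. -/
def radPowSMul (m : ℕ) (N : Submodule B Q) : Submodule B Q :=
  span B {x | ∃ b y, d.IsRadPow m b ∧ y ∈ N ∧ x = b • y}

variable {d}

lemma radPowSMul_mono (m : ℕ) {N N' : Submodule B Q} (h : N ≤ N') :
    d.radPowSMul m N ≤ d.radPowSMul m N' :=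
  span_mono fun _ ⟨b, y, hb, hy, hx⟩ => ⟨b, y, hb, h hy, hx⟩

lemma radPowSMul_anti {m m' : ℕ} (h : m ≤ m') (N : Submodule B Q) :
    d.radPowSMul m' N ≤ d.radPowSMul m N :=
  span_mono fun _ ⟨b, y, hb, hy, hx⟩ => ⟨b, y, hb.mono h, hy, hx⟩

lemma radPowSMul_eq_bot {m : ℕ} (hm : n ≤ m) (N : Submodule B Q) : d.radPowSMul m N = ⊥ :=
  eq_bot_iff.mpr <| span_le.mpr fun _ ⟨b, y, hb, _, hx⟩ => by
    rw [hx, hb.eq_zero hm, zero_smul]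
    exact zero_mem _

lemma map_radPowSMul_le {Q' : Type u} [AddCommGroup Q'] [Module B Q'] (f : Q →ₗ[B] Q')
    (m : ℕ) (N : Submodule B Q) : (d.radPowSMul m N).map f ≤ d.radPowSMul m (N.map f) := by
  rw [radPowSMul, map_span, span_le]
  rintro _ ⟨_, ⟨b, y, hb, hy, rfl⟩, rfl⟩
  exact subset_span ⟨b, f y, hb, mem_map_of_mem hy, map_smul f b y⟩

lemma smul_mem_radPowSMul (hdir : d.Directed) {N : Submodule B Q} {a m : ℕ} {b : B}
    (hb : d.IsRadPow a b) {x : Q} (hx : x ∈ d.radPowSMul m N) :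
    b • x ∈ d.radPowSMul (a + m) N := by
  induction hx using span_induction generalizing b with
  | mem x hx =>
    obtain ⟨b', y, hb', hy, rfl⟩ := hx
    rw [← mul_smul]
    exact subset_span ⟨b * b', y, hb.mul hb', hy, rfl⟩
  | zero => simp
  | add x y _ _ ihx ihy => simpa only [smul_add] using add_mem (ihx hb) (ihy hb)
  | smul c x _ ih =>
    rw [← mul_smul]
    simpa using ih (hb.mul (hdir.isRadPow_zero c))

lemma radPowSMul_radPowSMul_le (hdir : d.Directed) (a m : ℕ) (N : Submodule B Q) :
    d.radPowSMul a (d.radPowSMul m N) ≤ d.radPowSMul (a + m) N :=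
  span_le.mpr fun _ ⟨_, _, hb, hy, hx⟩ => hx ▸ smul_mem_radPowSMul hdir hb hy

/-- Nakayama's lemma; `(rad B)^n = 0` makes it a finite iteration. -/
lemma Directed.eq_bot_of_le_radPowSMul (hdir : d.Directed) {N : Submodule B Q}
    (h : N ≤ d.radPowSMul 1 N) : N = ⊥ := by
  have key : ∀ m, N ≤ d.radPowSMul (m + 1) N := by
    intro m
    induction m with
    | zero => exact h
    | succ m ih =>
      calc N ≤ d.radPowSMul 1 N := h
        _ ≤ d.radPowSMul 1 (d.radPowSMul (m + 1) N) := radPowSMul_mono 1 ih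
        _ ≤ d.radPowSMul (m + 1 + 1) N := by
          rw [add_comm (m + 1)]; exact radPowSMul_radPowSMul_le hdir 1 (m + 1) N
  simpa [radPowSMul_eq_bot (Nat.le_succ n)] using key n

lemma Directed.subsingleton_of_top_le_radPowSMul (hdir : d.Directed)
    (h : (⊤ : Submodule B Q) ≤ d.radPowSMul 1 ⊤) : Subsingleton Q :=
  (Submodule.subsingleton_iff B).mp <|
    subsingleton_iff_bot_eq_top.mp (hdir.eq_bot_of_le_radPowSMul h).symm

lemma Directed.eq_top_of_le_sup_radPowSMul (hdir : d.Directed) {S : Submodule B Q}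
    (h : ⊤ ≤ S ⊔ d.radPowSMul 1 ⊤) : S = ⊤ := by
  refine Submodule.Quotient.subsingleton_iff.mp (hdir.subsingleton_of_top_le_radPowSMul ?_)
  calc ⊤ = (S ⊔ d.radPowSMul 1 ⊤).map S.mkQ := by
        rw [top_le_iff.mp h, Submodule.map_top, range_mkQ]
    _ = (d.radPowSMul 1 ⊤).map S.mkQ := by
        rw [Submodule.map_sup, mkQ_map_self, bot_sup_eq]
    _ ≤ d.radPowSMul 1 (map S.mkQ ⊤) := map_radPowSMul_le _ _ _
    _ ≤ d.radPowSMul 1 ⊤ := radPowSMul_mono 1 le_top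

open LinearMap

section ProjectiveCover

variable {Q' N : Type u} [AddCommGroup Q'] [Module B Q'] [AddCommGroup N] [Module B N]

lemma Directed.surjective_of_comp_eq (hdir : d.Directed) {π : Q →ₗ[B] N} {ρ : Q' →ₗ[B] N}
    (hrange : range ρ ≤ range π) (hρ : ker ρ ≤ d.radPowSMul 1 ⊤) {g : Q →ₗ[B] Q'}
    (hg : ρ ∘ₗ g = π) : Function.Surjective g := by
  refine range_eq_top.mp (hdir.eq_top_of_le_sup_radPowSMul fun x _ => ?_)
  obtain ⟨q, hq⟩ := hrange (mem_range_self ρ x)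
  have hker : x - g q ∈ ker ρ := by
    rw [mem_ker, map_sub, ← comp_apply, hg, hq, sub_self]
  simpa using add_mem (mem_sup_left (mem_range_self g q)) (mem_sup_right (hρ hker))

lemma Directed.injective_of_comp_eq (hdir : d.Directed) {π : Q →ₗ[B] N} {ρ : Q' →ₗ[B] N}
    (hπ : ker π ≤ d.radPowSMul 1 ⊤) {g : Q →ₗ[B] Q'} (hg : ρ ∘ₗ g = π) {h : Q' →ₗ[B] Q}
    (hgh : g ∘ₗ h = LinearMap.id) : Function.Injective g := by
  -- `id - h ∘ g` projects `Q` onto `ker g` and preserves radical layers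
  set p : Q →ₗ[B] Q := LinearMap.id - h ∘ₗ g
  have hp : range p ≤ ker g := by
    rintro _ ⟨y, rfl⟩
    rw [mem_ker, LinearMap.sub_apply, map_sub, comp_apply, ← comp_apply g h, hgh, id_apply,
      id_apply, sub_self]
  refine ker_eq_bot.mp (hdir.eq_bot_of_le_radPowSMul fun x hx => ?_)
  have hxπ : x ∈ ker π := by rw [mem_ker, ← hg, comp_apply, mem_ker.mp hx, map_zero]
  have hpx : p x = x := by simp [p, mem_ker.mp hx]
  rw [← hpx]
  refine radPowSMul_mono 1 (by rwa [Submodule.map_top]) (map_radPowSMul_le p 1 ⊤ ?_)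
  exact mem_map_of_mem (hπ hxπ)

/-- Uniqueness of projective covers. -/
theorem Directed.exists_linearEquiv_map_ker_eq (hdir : d.Directed) [Module.Projective B Q]
    [Module.Projective B Q'] {π : Q →ₗ[B] N} {ρ : Q' →ₗ[B] N} (hrange : range π = range ρ)
    (hπ : ker π ≤ d.radPowSMul 1 ⊤) (hρ : ker ρ ≤ d.radPowSMul 1 ⊤) :
    ∃ e : Q ≃ₗ[B] Q', (ker π).map (e : Q →ₗ[B] Q') = ker ρ := by
  obtain ⟨g, hg'⟩ := Module.projective_lifting_property ρ.rangeRestrict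
    (π.codRestrict (range ρ) fun x => hrange ▸ mem_range_self π x) ρ.surjective_rangeRestrict
  have hg : ρ ∘ₗ g = π := by
    ext x
    exact congrArg Subtype.val (LinearMap.congr_fun hg' x)
  have hsurj := hdir.surjective_of_comp_eq hrange.ge hρ hg
  obtain ⟨h, hgh⟩ := Module.projective_lifting_property g LinearMap.id hsurj
  refine ⟨.ofBijective g ⟨hdir.injective_of_comp_eq hπ hg hgh, hsurj⟩, ?_⟩
  change (ker π).map g = ker ρ
  rw [← hg, ker_comp]
  exact map_comap_eq_of_surjective hsurj _

end ProjectiveCover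

lemma e_mul_mem_cornerSpace {w : Fin n} {x : B} (hx : x ∈ leftIdeal (d.e w)) (j : Fin n) :
    d.e j * x ∈ cornerSpace K (d.e j) (d.e w) := by
  simpa [mul_assoc, mem_leftIdeal.mp hx] using d.e_mul_mul_mem_cornerSpace x j w

lemma Directed.e_mul_eq_zero_of_lt (hdir : d.Directed) {w j : Fin n} {x : B}
    (hx : x ∈ leftIdeal (d.e w)) (h : j < w) : d.e j * x = 0 := by
  rw [← mem_leftIdeal.mp hx, ← mul_assoc]
  exact hdir.2.1 w j h x

lemma IsRadPow.e_mul_mul_eq_zero {r a : ℕ} {b y : B} (hb : d.IsRadPow r b)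
    (hy : ∀ m : Fin n, (m : ℕ) < a → d.e m * y = 0) {j : Fin n} (hj : (j : ℕ) < a + r) :
    d.e j * (b * y) = 0 := by
  rw [d.e_mul_mul_eq_sum]
  refine Finset.sum_eq_zero fun m _ => ?_
  by_cases hm : (m : ℕ) < a
  · rw [hy m hm, mul_zero]
  · rw [hb m j (by omega), zero_mul]

lemma isRadPow_e_mul {w j : Fin n} {t : ℕ} {x : B} (hx : x ∈ leftIdeal (d.e w))
    (h : (w : ℕ) + t ≤ j) : d.IsRadPow t (d.e j * x) := by
  intro a c hc
  have hcorner := e_mul_mem_cornerSpace (K := K) hx j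
  rw [← hcorner.out]
  by_cases hcj : c = j
  · have haw : w ≠ a := by rintro rfl; omega
    simp only [mul_assoc, d.e_mul_e_of_ne haw, mul_zero]
  · simp only [← mul_assoc, d.e_mul_e_of_ne hcj, zero_mul]

/-- The `t`-th radical layer of `P(w) = B e_w` consists of the paths of length `≥ t`. -/
lemma Directed.mem_radPowSMul_leftIdeal_iff (hdir : d.Directed) {w : Fin n} {t : ℕ}
    {x : leftIdeal (d.e w)} :
    x ∈ d.radPowSMul t ⊤ ↔ ∀ j : Fin n, (j : ℕ) < w + t → d.e j * (x : B) = 0 := by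
  constructor
  · intro hx
    induction hx using span_induction with
    | mem x hx =>
      obtain ⟨b, y, hb, -, rfl⟩ := hx
      exact fun j hj => hb.e_mul_mul_eq_zero
        (fun m hm => hdir.e_mul_eq_zero_of_lt y.2 (Fin.lt_def.mpr hm)) hj
    | zero => simp
    | add x y _ _ ihx ihy => intro j hj; simp [mul_add, ihx j hj, ihy j hj]
    | smul c x _ ih => exact fun j hj => (hdir.isRadPow_zero c).e_mul_mul_eq_zero ih (by simpa)
  · intro h
    rw [← d.sum_e_smul x]
    refine sum_mem fun j _ => ?_
    by_cases hj : (j : ℕ) < w + t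
    · rw [show d.e j • x = 0 from Subtype.ext (h j hj)]
      exact zero_mem _
    · refine subset_span ⟨d.e j * x, ⟨d.e w, d.e_mul_self w⟩, isRadPow_e_mul x.2 (by omega),
        trivial, Subtype.ext ?_⟩
      simp [mul_assoc, mem_leftIdeal.mp x.2]

lemma Directed.radPowSMul_leftIdeal_eq_bot (hdir : d.Directed) {w : Fin n} {t : ℕ}
    (h : n ≤ (w : ℕ) + t) : d.radPowSMul t (⊤ : Submodule B (leftIdeal (d.e w))) = ⊥ := by
  refine eq_bot_iff.mpr fun x hx => ?_
  rw [hdir.mem_radPowSMul_leftIdeal_iff] at hx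
  rw [mem_bot, ← d.sum_e_smul x]
  exact Finset.sum_eq_zero fun j _ => Subtype.ext (hx j (by omega))

lemma e_mul_of_mem_cornerSpace {i j : Fin n} {x : B} (hx : x ∈ cornerSpace K (d.e j) (d.e i)) :
    d.e j * x = x := by
  rw [← hx.out, ← mul_assoc, ← mul_assoc, d.e_mul_self]

lemma mul_e_of_mem_cornerSpace {i j : Fin n} {x : B} (hx : x ∈ cornerSpace K (d.e j) (d.e i)) :
    x * d.e i = x := by
  rw [← hx.out, mul_assoc, d.e_mul_self]

lemma mul_mem_cornerSpace {i j k : Fin n} {x y : B} (hx : x ∈ cornerSpace K (d.e k) (d.e j))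
    (hy : y ∈ cornerSpace K (d.e j) (d.e i)) : x * y ∈ cornerSpace K (d.e k) (d.e i) := by
  change d.e k * (x * y) * d.e i = x * y
  rw [← mul_assoc, e_mul_of_mem_cornerSpace hx, mul_assoc, mul_e_of_mem_cornerSpace hy]

section SimpleModule

variable {S : Type u} [AddCommGroup S] [Module B S] {j : Fin n}

lemma IsSimpleAt.e_smul_eq_zero (hS : d.IsSimpleAt j S) {m : Fin n} (hm : m ≠ j) (s : S) :
    d.e m • s = 0 := by
  rw [← hS.2 s, ← mul_smul, d.e_mul_e_of_ne hm, zero_smul]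

lemma IsSimpleAt.smul_eq (hS : d.IsSimpleAt j S) (b : B) (s : S) :
    b • s = (d.e j * b * d.e j) • s := by
  conv_lhs => rw [← hS.2 s, ← d.sum_e_smul (b • d.e j • s)]
  rw [Finset.sum_eq_single j (fun m _ hm => hS.e_smul_eq_zero hm _) (by simp)]
  simp only [mul_smul]

lemma IsSimpleAt.smul_eq_zero_of_isRad (hS : d.IsSimpleAt j S) {b : B} (hb : d.IsRad b)
    (s : S) : b • s = 0 := by
  rw [hS.smul_eq, hb j, zero_smul]

lemma Directed.exists_smul_eq_algebraMap_smul (hdir : d.Directed) (hS : d.IsSimpleAt j S)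
    (b : B) : ∃ c : K, d.e j * b * d.e j = c • d.e j ∧ ∀ s : S, b • s = algebraMap K B c • s := by
  obtain ⟨c, hc⟩ := hdir.2.2 j b
  refine ⟨c, hc, fun s => ?_⟩
  rw [hS.smul_eq, hc, Algebra.smul_def, mul_smul, hS.2]

lemma Directed.finrank_eq_one [Module K S] [IsScalarTower K B S] (hdir : d.Directed)
    (hS : d.IsSimpleAt j S) : Module.finrank K S = 1 := by
  have := hS.1
  have := IsSimpleModule.nontrivial B S
  obtain ⟨s, hs⟩ := exists_ne (0 : S)
  refine (finrank_eq_one_iff_of_nonzero' s hs).mpr fun t => ?_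
  obtain ⟨b, rfl⟩ := IsSimpleModule.toSpanSingleton_surjective B hs t
  obtain ⟨c, -, hc⟩ := hdir.exists_smul_eq_algebraMap_smul hS b
  exact ⟨c, by rw [toSpanSingleton_apply, hc, algebraMap_smul]⟩

abbrev leftIdealToSimple (d : IdemData K n B) (j : Fin n) (s : S) : leftIdeal (d.e j) →ₗ[B] S :=
  toSpanSingleton B S s ∘ₗ (leftIdeal (d.e j)).subtype

lemma IsSimpleAt.range_leftIdealToSimple (hS : d.IsSimpleAt j S) {s : S} (hs : s ≠ 0) :
    range (d.leftIdealToSimple j s) = ⊤ := by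
  have := hS.1
  refine eq_top_iff.mpr fun t _ => ?_
  obtain ⟨b, rfl⟩ := IsSimpleModule.toSpanSingleton_surjective B hs t
  refine ⟨⟨b * d.e j, by rw [mem_leftIdeal, mul_assoc, d.e_mul_self]⟩, ?_⟩
  simp [mul_smul, hS.2 s]

lemma Directed.ker_leftIdealToSimple (hdir : d.Directed) (hS : d.IsSimpleAt j S) {s : S}
    (hs : s ≠ 0) : ker (d.leftIdealToSimple j s) = d.radPowSMul 1 ⊤ := by
  ext x
  rw [hdir.mem_radPowSMul_leftIdeal_iff, mem_ker]
  obtain ⟨c, hc, hxs⟩ := hdir.exists_smul_eq_algebraMap_smul hS x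
  have hcorner : d.e j * x = c • d.e j := by rw [← hc, mul_assoc, mem_leftIdeal.mp x.2]
  change (x : B) • s = 0 ↔ _
  rw [hxs, algebraMap_smul_eq_zero_iff, or_iff_left hs]
  constructor
  · rintro rfl m hm
    rcases (Nat.lt_succ_iff.mp hm).lt_or_eq with hm | hm
    · exact hdir.e_mul_eq_zero_of_lt x.2 hm
    · rw [Fin.ext hm, hcorner, zero_smul]
  · intro h
    by_contra hc0
    refine hs ?_
    rw [← hS.2 s, ← one_smul K (d.e j), ← inv_mul_cancel₀ hc0, mul_smul, ← hcorner,
      h j (by omega), smul_zero, zero_smul]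

lemma IsSimpleAt.hom_eq_zero (hS : d.IsSimpleAt j S) {v : Fin n} (hv : v ≠ j)
    (φ : leftIdeal (d.e v) →ₗ[B] S) : φ = 0 := by
  set ε : leftIdeal (d.e v) := ⟨d.e v, d.e_mul_self v⟩
  have hε : φ ε = 0 := by
    rw [← show d.e v • ε = ε from Subtype.ext (d.e_mul_self v), map_smul,
      hS.e_smul_eq_zero hv]
  refine LinearMap.ext fun x => ?_
  rw [show x = (x : B) • ε from Subtype.ext (mem_leftIdeal.mp x.2).symm, map_smul, hε,
    smul_zero, LinearMap.zero_apply]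

variable [Module K S] [IsScalarTower K B S] [SMulCommClass B K S]

def IsSimpleAt.homLeftIdealEquiv (hS : d.IsSimpleAt j S) :
    (leftIdeal (d.e j) →ₗ[B] S) ≃ₗ[K] S where
  toFun φ := φ ⟨d.e j, d.e_mul_self j⟩
  map_add' _ _ := rfl
  map_smul' _ _ := rfl
  invFun := d.leftIdealToSimple j
  left_inv φ := by
    ext x
    change (x : B) • φ _ = φ x
    rw [← map_smul]
    exact congrArg φ (Subtype.ext (mem_leftIdeal.mp x.2))
  right_inv := hS.2

lemma Directed.finrank_hom_leftIdeal (hdir : d.Directed) (hS : d.IsSimpleAt j S) (v : Fin n) :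
    Module.finrank K (leftIdeal (d.e v) →ₗ[B] S) = if v = j then 1 else 0 := by
  split_ifs with hv
  · subst hv
    rw [hS.homLeftIdealEquiv.finrank_eq, hdir.finrank_eq_one hS]
  · have : Subsingleton (leftIdeal (d.e v) →ₗ[B] S) := ⟨fun φ ψ => by
      rw [hS.hom_eq_zero hv φ, hS.hom_eq_zero hv ψ]⟩
    exact Module.finrank_zero_of_subsingleton

end SimpleModule

end IdemData

namespace IsBandAlgebra

open Submodule LinearMap IdemData

variable {K : Type u} [Field K] {n : ℕ} {B : Type u} [Ring B] [Algebra K B]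
  {d : IdemData K n B} {ℓ : ℕ}

lemma le_and_lt_of_mem_cornerSpace (hband : IsBandAlgebra d ℓ) {i j : Fin n} {p : B}
    (hp : p ∈ cornerSpace K (d.e j) (d.e i)) (hp0 : p ≠ 0) : i ≤ j ∧ (j : ℕ) < i + ℓ := by
  by_contra h
  rw [hband.2.2.1 i j h, mem_bot] at hp
  exact hp0 hp

lemma exists_ne_zero_mem_cornerSpace (hband : IsBandAlgebra d ℓ) {i j : Fin n} (hij : i ≤ j)
    (hji : (j : ℕ) < i + ℓ) : ∃ p ∈ cornerSpace K (d.e j) (d.e i), p ≠ 0 := by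
  refine exists_mem_ne_zero_of_ne_bot fun h => ?_
  have hrank := hband.2.1 i j hij hji
  rw [h, finrank_bot] at hrank
  exact zero_ne_one hrank

lemma exists_smul_eq (hband : IsBandAlgebra d ℓ) {i j : Fin n} {p x : B}
    (hp : p ∈ cornerSpace K (d.e j) (d.e i)) (hp0 : p ≠ 0)
    (hx : x ∈ cornerSpace K (d.e j) (d.e i)) : ∃ c : K, c • p = x := by
  obtain ⟨hij, hji⟩ := hband.le_and_lt_of_mem_cornerSpace hp hp0
  obtain ⟨c, hc⟩ := (finrank_eq_one_iff_of_nonzero' (⟨p, hp⟩ : cornerSpace K (d.e j) (d.e i))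
    (by simpa using hp0)).mp (hband.2.1 i j hij hji) ⟨x, hx⟩
  exact ⟨c, congrArg Subtype.val hc⟩

lemma ker_mulRightLeftIdeal (hband : IsBandAlgebra d ℓ) {u w : Fin n} {p : B}
    (hp : p ∈ cornerSpace K (d.e u) (d.e w)) (hp0 : p ≠ 0) :
    ker (mulRightLeftIdeal (d.e u) (mul_e_of_mem_cornerSpace hp)) =
      d.radPowSMul (w + ℓ - u) ⊤ := by
  obtain ⟨hwu, hu⟩ := hband.le_and_lt_of_mem_cornerSpace hp hp0
  ext x
  rw [hband.1.mem_radPowSMul_leftIdeal_iff, show (u : ℕ) + (w + ℓ - u) = w + ℓ by omega,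
    mem_ker, Subtype.ext_iff]
  change (x : B) * p = 0 ↔ _
  constructor
  · intro h j hj
    by_cases hju : j < u
    · exact hband.1.e_mul_eq_zero_of_lt x.2 hju
    · by_contra hne
      refine hband.2.2.2 w u j hwu (not_lt.mp hju) hj _ _ (e_mul_mem_cornerSpace x.2 j) hp hne
        hp0 ?_
      rw [mul_assoc, h, mul_zero]
  · intro h
    rw [← d.sum_e_mul (x : B), Finset.sum_mul]
    refine Finset.sum_eq_zero fun j _ => ?_
    by_cases hj : (j : ℕ) < w + ℓ
    · rw [h j hj, zero_mul]
    · have hmem := mul_mem_cornerSpace (e_mul_mem_cornerSpace (K := K) x.2 j) hp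
      rwa [hband.2.2.1 w j (by omega), mem_bot] at hmem

lemma range_mulRightLeftIdeal (hband : IsBandAlgebra d ℓ) {u w : Fin n} {p : B}
    (hp : p ∈ cornerSpace K (d.e u) (d.e w)) (hp0 : p ≠ 0) :
    range (mulRightLeftIdeal (d.e u) (mul_e_of_mem_cornerSpace hp)) =
      d.radPowSMul (u - w) ⊤ := by
  obtain ⟨hwu, hu⟩ := hband.le_and_lt_of_mem_cornerSpace hp hp0
  ext y
  rw [hband.1.mem_radPowSMul_leftIdeal_iff, show (w : ℕ) + (u - w) = u by omega]
  constructor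
  · rintro ⟨x, rfl⟩ j hj
    change d.e j * ((x : B) * p) = 0
    rw [← mul_assoc, hband.1.e_mul_eq_zero_of_lt x.2 (Fin.lt_def.mpr hj), zero_mul]
  · intro h
    rw [← d.sum_e_smul y]
    refine sum_mem fun j _ => ?_
    have hy := e_mul_mem_cornerSpace (K := K) y.2 j
    by_cases hj : u ≤ j ∧ (j : ℕ) < w + ℓ
    · obtain ⟨a, ha, ha0⟩ := hband.exists_ne_zero_mem_cornerSpace hj.1 (by omega)
      have hap : a * p ≠ 0 := hband.2.2.2 w u j hwu hj.1 hj.2 a p ha hp ha0 hp0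
      obtain ⟨c, hc⟩ := hband.exists_smul_eq (mul_mem_cornerSpace ha hp) hap hy
      refine ⟨⟨c • a, ?_⟩, Subtype.ext ?_⟩
      · rw [mem_leftIdeal, smul_mul_assoc, mul_e_of_mem_cornerSpace ha]
      · change c • a * p = d.e j * y
        rw [smul_mul_assoc, hc]
    · have hzero : d.e j * (y : B) = 0 := by
        by_cases hju : (j : ℕ) < u
        · exact h j hju
        · rwa [hband.2.2.1 w j (by rw [Fin.le_def] at hwu ⊢; omega), mem_bot] at hy
      rw [show d.e j • y = 0 from Subtype.ext hzero]
      exact zero_mem _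

end IsBandAlgebra

namespace ProjRes

open Submodule LinearMap IdemData

variable {K : Type u} [Field K] {n : ℕ} {B : Type u} [Ring B] [Algebra K B]
  {d : IdemData K n B} {M : Type u} [AddCommGroup M] [Module B M] (R : ProjRes K B M)

/-- `ker (P k → P (k - 1))`, where `P (-1)` stands for `M`. -/
def syz : (k : ℕ) → Submodule B (R.P k)
  | 0 => ker R.aug
  | k + 1 => ker (R.d k)

lemma range_d (k : ℕ) : range (R.d k) = R.syz k := by
  cases k with
  | zero => exact R.exact0.symm
  | succ k => exact (R.exact k).symm

/-- `P k ≅ P(v)`, carrying the `k`-th syzygy onto the `t`-th radical layer of `P(v)`;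
when there is no vertex `v`, `P k = 0`. -/
def HasShape (d : IdemData K n B) (k v t : ℕ) : Prop :=
  if h : v < n then
    ∃ e : R.P k ≃ₗ[B] leftIdeal (d.e ⟨v, h⟩),
      (R.syz k).map (e : R.P k →ₗ[B] leftIdeal (d.e ⟨v, h⟩)) = d.radPowSMul t ⊤
  else Subsingleton (R.P k)

variable {R}

lemma HasShape.nonempty_linearEquiv {k v t : ℕ} (h : R.HasShape d k v t) (hv : v < n) :
    Nonempty (R.P k ≃ₗ[B] leftIdeal (d.e ⟨v, hv⟩)) := by
  rw [HasShape, dif_pos hv] at h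
  obtain ⟨e, -⟩ := h
  exact ⟨e⟩

lemma HasShape.subsingleton {k v t : ℕ} (h : R.HasShape d k v t) (hv : ¬v < n) :
    Subsingleton (R.P k) := by
  rwa [HasShape, dif_neg hv] at h

lemma Minimal.syz_le (hdir : d.Directed) (hmin : R.Minimal d) (k : ℕ) :
    R.syz k ≤ d.radPowSMul 1 ⊤ := by
  rw [← R.range_d]
  refine (hmin k).trans (span_le.mpr ?_)
  rintro _ ⟨b, m, hb, rfl⟩
  exact subset_span ⟨b, m, hb.isRadPow_one hdir, trivial, rfl⟩

lemma Minimal.subsingleton_of_syz_eq_bot (hdir : d.Directed) (hmin : R.Minimal d) {k : ℕ}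
    (h : R.syz k = ⊥) : Subsingleton (R.P (k + 1)) := by
  have htop : R.syz (k + 1) = ⊤ := ker_eq_top.mpr (range_eq_bot.mp (R.range_d k ▸ h))
  exact hdir.subsingleton_of_top_le_radPowSMul (htop ▸ hmin.syz_le hdir (k + 1))

lemma Minimal.comp_d_eq_zero (hmin : R.Minimal d) {S : Type u} [AddCommGroup S] [Module B S]
    {j : Fin n} (hS : d.IsSimpleAt j S) (k : ℕ) (φ : R.P k →ₗ[B] S) : φ ∘ₗ R.d k = 0 := by
  refine range_le_ker_iff.mp ((hmin k).trans (span_le.mpr ?_))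
  rintro _ ⟨b, m, hb, rfl⟩
  rw [SetLike.mem_coe, mem_ker, map_smul, hS.smul_eq_zero_of_isRad hb]

lemma Minimal.hasShape_zero (hdir : d.Directed) (hmin : R.Minimal d) {i : Fin n}
    (hS : d.IsSimpleAt i M) : R.HasShape d 0 i 1 := by
  rw [HasShape, dif_pos i.isLt]
  have := hS.1
  have := IsSimpleModule.nontrivial B M
  obtain ⟨s, hs⟩ := exists_ne (0 : M)
  have := projective_leftIdeal (d.e_mul_self i)
  have := R.proj 0
  obtain ⟨e, he⟩ := hdir.exists_linearEquiv_map_ker_eq (π := R.aug)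
    (ρ := d.leftIdealToSimple i s)
    (by rw [range_eq_top.mpr R.aug_surj, hS.range_leftIdealToSimple hs])
    (hmin.syz_le hdir 0) (hdir.ker_leftIdealToSimple hS hs).le
  exact ⟨e, he.trans (hdir.ker_leftIdealToSimple hS hs)⟩

lemma Minimal.subsingleton_succ_of_hasShape (hdir : d.Directed) (hmin : R.Minimal d)
    {k v t : ℕ} (h : R.HasShape d k v t) (hvt : n ≤ v + t) : Subsingleton (R.P (k + 1)) := by
  refine hmin.subsingleton_of_syz_eq_bot hdir ?_
  by_cases hv : v < n
  · rw [HasShape, dif_pos hv] at h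
    obtain ⟨e, he⟩ := h
    rw [← Submodule.map_eq_bot_iff (e := e), he,
      hdir.radPowSMul_leftIdeal_eq_bot (by simp; omega)]
  · have := h.subsingleton hv
    exact Submodule.eq_bot_of_subsingleton

/-- One step of the resolution: the syzygy `J^t P(v)` is covered by `P(v + t)`, with kernel
`J^(ℓ - t) P(v + t)`. -/
lemma Minimal.hasShape_succ {ℓ : ℕ} (hband : IsBandAlgebra d ℓ) (hmin : R.Minimal d)
    {k v t : ℕ} (h : R.HasShape d k v t) (ht : 1 ≤ t) (htℓ : t < ℓ) :
    R.HasShape d (k + 1) (v + t) (ℓ - t) := by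
  by_cases hvt : v + t < n
  swap
  · rw [HasShape, dif_neg hvt]
    exact hmin.subsingleton_succ_of_hasShape hband.1 h (by omega)
  have hv : v < n := by omega
  rw [HasShape, dif_pos hvt]
  rw [HasShape, dif_pos hv] at h
  obtain ⟨e, he⟩ := h
  obtain ⟨p, hp, hp0⟩ := hband.exists_ne_zero_mem_cornerSpace (i := ⟨v, hv⟩)
    (j := ⟨v + t, hvt⟩) (by simp [Fin.le_def]) (by simp; omega)
  have := projective_leftIdeal (d.e_mul_self ⟨v + t, hvt⟩)
  have := R.proj (k + 1)
  have hker : ker ((e : R.P k →ₗ[B] leftIdeal (d.e ⟨v, hv⟩)) ∘ₗ R.d k) = R.syz (k + 1) :=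
    e.ker_comp (R.d k)
  obtain ⟨e', he'⟩ := hband.1.exists_linearEquiv_map_ker_eq
    (ρ := mulRightLeftIdeal _ (mul_e_of_mem_cornerSpace hp))
    (by rw [range_comp, R.range_d, he, hband.range_mulRightLeftIdeal hp hp0]; simp)
    (hker ▸ hmin.syz_le hband.1 (k + 1))
    (by rw [hband.ker_mulRightLeftIdeal hp hp0]; exact radPowSMul_anti (by simp; omega) ⊤)
  refine ⟨e', ?_⟩
  rw [← hker, he', hband.ker_mulRightLeftIdeal hp hp0]
  congr 1
  simp only
  omega

lemma Minimal.hasShape_even_odd {ℓ : ℕ} (hband : IsBandAlgebra d ℓ) (hℓ : 2 ≤ ℓ)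
    (hmin : R.Minimal d) {i : Fin n} (hS : d.IsSimpleAt i M) (q : ℕ) :
    R.HasShape d (2 * q) (i + q * ℓ) 1 ∧ R.HasShape d (2 * q + 1) (i + q * ℓ + 1) (ℓ - 1) := by
  have hsucc {k v : ℕ} (h : R.HasShape d k v 1) : R.HasShape d (k + 1) (v + 1) (ℓ - 1) :=
    hmin.hasShape_succ hband h le_rfl (by omega)
  induction q with
  | zero =>
    have h := hmin.hasShape_zero hband.1 hS
    exact ⟨by simpa using h, by simpa using hsucc h⟩
  | succ q ih =>
    have h := hmin.hasShape_succ hband ih.2 (by omega) (by omega)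
    rw [show ℓ - (ℓ - 1) = 1 by omega, show i + q * ℓ + 1 + (ℓ - 1) = i + (q + 1) * ℓ by
      rw [add_one_mul]; omega] at h
    exact ⟨h, hsucc h⟩

lemma HasShape.finrank_hom {S : Type u} [AddCommGroup S] [Module B S] [Module K S]
    [IsScalarTower K B S] [SMulCommClass B K S] (hdir : d.Directed) {j : Fin n}
    (hS : d.IsSimpleAt j S) {k v t : ℕ} (h : R.HasShape d k v t) :
    Module.finrank K (R.P k →ₗ[B] S) = if (j : ℕ) = v then 1 else 0 := by
  by_cases hv : v < n
  · obtain ⟨e⟩ := h.nonempty_linearEquiv hv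
    rw [(LinearEquiv.congrLeft S K e).finrank_eq, hdir.finrank_hom_leftIdeal hS]
    simp [Fin.ext_iff, eq_comm]
  · have := h.subsingleton hv
    rw [if_neg (by omega)]
    exact Module.finrank_zero_of_subsingleton

end ProjRes

theorem statement17_general
    (K : Type) [Field K] (n ℓ : ℕ) (hℓ : 3 ≤ ℓ)
    (B : Type) [Ring B] [Algebra K B]
    (dB : IdemData K n B) (hband : IsBandAlgebra dB ℓ)
    (i : Fin n)
    (Si : Type) [AddCommGroup Si] [Module B Si] (hSi : dB.IsSimpleAt i Si)
    -- a minimal projective resolution of the simple module `L_B(i)`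
    (R : ProjRes K B Si) (hmin : R.Minimal dB) :
    -- (1) shape of the resolution: `P^{2q} = P_B(i + qℓ)` and `P^{2q+1} = P_B(i + qℓ + 1)`
    -- as long as these vertices exist, and the resolution vanishes beyond.
    (∀ q : ℕ, ∀ h : (i : ℕ) + q * ℓ < n,
      Nonempty (R.P (2 * q) ≃ₗ[B] ↥(leftIdeal (dB.e ⟨(i : ℕ) + q * ℓ, h⟩)))) ∧
    (∀ q : ℕ, ¬((i : ℕ) + q * ℓ < n) → Subsingleton (R.P (2 * q))) ∧
    (∀ q : ℕ, ∀ h : (i : ℕ) + q * ℓ + 1 < n,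
      Nonempty (R.P (2 * q + 1) ≃ₗ[B] ↥(leftIdeal (dB.e ⟨(i : ℕ) + q * ℓ + 1, h⟩)))) ∧
    (∀ q : ℕ, ¬((i : ℕ) + q * ℓ + 1 < n) → Subsingleton (R.P (2 * q + 1))) ∧
    -- (2) `Ext^k_B(L_B(i), L_B(j))` is computed by `Hom_B(P^k, L_B(j))`, since the
    -- differentials of the `Hom` complex vanish (the resolution being minimal), and
    -- `dim Ext^{2q} = 1` iff `j = i + qℓ`, `dim Ext^{2q+1} = 1` iff `j = i + qℓ + 1`,
    -- and these dimensions are `0` otherwise.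
    (∀ (j : Fin n) (Sj : Type) (_ : AddCommGroup Sj) (_ : Module B Sj) (_ : Module K Sj)
      (_ : IsScalarTower K B Sj) (_ : SMulCommClass B K Sj), dB.IsSimpleAt j Sj →
      (∀ (k : ℕ) (φ : R.P k →ₗ[B] Sj), φ.comp (R.d k) = 0) ∧
      (∀ q : ℕ, Module.finrank K (R.P (2 * q) →ₗ[B] Sj) =
        if (j : ℕ) = (i : ℕ) + q * ℓ then 1 else 0) ∧
      (∀ q : ℕ, Module.finrank K (R.P (2 * q + 1) →ₗ[B] Sj) =
        if (j : ℕ) = (i : ℕ) + q * ℓ + 1 then 1 else 0)) := by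
  have hshape := hmin.hasShape_even_odd hband (by omega) hSi
  exact ⟨fun q => (hshape q).1.nonempty_linearEquiv, fun q => (hshape q).1.subsingleton,
    fun q => (hshape q).2.nonempty_linearEquiv, fun q => (hshape q).2.subsingleton,
    fun j Sj _ _ _ _ _ hSj => ⟨hmin.comp_d_eq_zero hSj,
      fun q => (hshape q).1.finrank_hom hband.1 hSj,
      fun q => (hshape q).2.finrank_hom hband.1 hSj⟩⟩

/-- Section 7.1 of the paper.
Let `ℓ ≥ 3` and `B = K𝔸ₙ/(rad K𝔸ₙ)^ℓ` (characterized by `IsBandAlgebra`; vertices are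
`0, …, n-1` here instead of `1, …, n`).  Then the `k`-th term of the minimal projective
resolution of `L_B(i)` is `P_B(i + qℓ)` if `k = 2q` and `P_B(i + qℓ + 1)` if `k = 2q + 1`
(as long as these vertices exist, and the resolution terminates — is zero — otherwise);
moreover for all vertices `j` and all `k ≥ 0`,
`dim_K Ext^{2q}_B(L_B(i), L_B(j)) = 1` if `j = i + qℓ` (and `j ≤ n`) and `= 0` otherwise,
and `dim_K Ext^{2q+1}_B(L_B(i), L_B(j)) = 1` if `j = i + qℓ + 1` and `= 0` otherwise;
here `Ext^k_B(L_B(i), L_B(j)) = Hom_B(P^k, L_B(j))` because the Hom-complex differentials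
vanish (first part of conclusion (2)). -/
theorem statement17
    (K : Type) [Field K] [IsAlgClosed K] (n ℓ : ℕ) (hℓ : 3 ≤ ℓ)
    (B : Type) [Ring B] [Algebra K B]
    (dB : IdemData K n B) (hband : IsBandAlgebra dB ℓ)
    (i : Fin n)
    (Si : Type) [AddCommGroup Si] [Module B Si] (hSi : dB.IsSimpleAt i Si)
    -- a minimal projective resolution of the simple module `L_B(i)`
    (R : ProjRes K B Si) (hmin : R.Minimal dB) :
    -- (1) shape of the resolution: `P^{2q} = P_B(i + qℓ)` and `P^{2q+1} = P_B(i + qℓ + 1)`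
    -- as long as these vertices exist, and the resolution vanishes beyond.
    (∀ q : ℕ, ∀ h : (i : ℕ) + q * ℓ < n,
      Nonempty (R.P (2 * q) ≃ₗ[B] ↥(leftIdeal (dB.e ⟨(i : ℕ) + q * ℓ, h⟩)))) ∧
    (∀ q : ℕ, ¬((i : ℕ) + q * ℓ < n) → Subsingleton (R.P (2 * q))) ∧
    (∀ q : ℕ, ∀ h : (i : ℕ) + q * ℓ + 1 < n,
      Nonempty (R.P (2 * q + 1) ≃ₗ[B] ↥(leftIdeal (dB.e ⟨(i : ℕ) + q * ℓ + 1, h⟩)))) ∧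
    (∀ q : ℕ, ¬((i : ℕ) + q * ℓ + 1 < n) → Subsingleton (R.P (2 * q + 1))) ∧
    -- (2) `Ext^k_B(L_B(i), L_B(j))` is computed by `Hom_B(P^k, L_B(j))`, since the
    -- differentials of the `Hom` complex vanish (the resolution being minimal), and
    -- `dim Ext^{2q} = 1` iff `j = i + qℓ`, `dim Ext^{2q+1} = 1` iff `j = i + qℓ + 1`,
    -- and these dimensions are `0` otherwise.
    (∀ (j : Fin n) (Sj : Type) (_ : AddCommGroup Sj) (_ : Module B Sj) (_ : Module K Sj)
      (_ : IsScalarTower K B Sj) (_ : SMulCommClass B K Sj), dB.IsSimpleAt j Sj →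
      (∀ (k : ℕ) (φ : R.P k →ₗ[B] Sj), φ.comp (R.d k) = 0) ∧
      (∀ q : ℕ, Module.finrank K (R.P (2 * q) →ₗ[B] Sj) =
        if (j : ℕ) = (i : ℕ) + q * ℓ then 1 else 0) ∧
      (∀ q : ℕ, Module.finrank K (R.P (2 * q + 1) →ₗ[B] Sj) =
        if (j : ℕ) = (i : ℕ) + q * ℓ + 1 then 1 else 0)) :=
  statement17_general K n ℓ hℓ B dB hband i Si hSi R hmin
end
end
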